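/- arXiv:2605.14357 — 2 statements merged into one kernel-verified Lean document; each statement's English description precedes it below -/
import Mathlib

section
/- Let $T>0$, $p\ge 1$, $f\in L^p((0,T))$ and $h\in L^1((0,T))$ with $f,h\ge 0$ a.e. Suppose there are constants $c_0,c_1\ge 0$ such that $f(t)\le c_0+\int_0^t h(s)\,ds+c_1\int_0^t f(s)^p\,ds$ for a.e. $t\in[0,T]$. Then there exists $\tilde T\in(0,T]$ (depending only on $h$, $c_0$, $c_1$, $p$) such that $f(t)\le 2c_0+2\int_0^t h(s)\,ds$ for a.e. $t\in[0,\tilde T]$. -/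
open MeasureTheory Set

/-- **Local nonlinear Grönwall lemma.**
If a nonnegative `f ∈ L^p((0,T))` satisfies
`f t ≤ c₀ + ∫₀ᵗ h + c₁ ∫₀ᵗ f^p` a.e., with `h ∈ L¹((0,T))` nonnegative and
`c₀, c₁ ≥ 0`, then there is `T' ∈ (0,T]` such that
`f t ≤ 2 c₀ + 2 ∫₀ᵗ h` for a.e. `t ∈ [0,T']`. -/
theorem local_nonlinear_gronwall
    (T p c0 c1 : ℝ) (hT : 0 < T) (hp : 1 ≤ p) (hc0 : 0 ≤ c0) (hc1 : 0 ≤ c1)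
    (f h : ℝ → ℝ)
    (hf_meas : AEMeasurable f (volume.restrict (Ioc 0 T)))
    (hf_nonneg : ∀ᵐ t ∂(volume.restrict (Ioc 0 T)), 0 ≤ f t)
    (hf_Lp : IntegrableOn (fun t => f t ^ p) (Ioc 0 T))
    (hh_nonneg : ∀ᵐ t ∂(volume.restrict (Ioc 0 T)), 0 ≤ h t)
    (hh_int : IntegrableOn h (Ioc 0 T))
    (hineq : ∀ᵐ t ∂(volume.restrict (Ioc 0 T)),
      f t ≤ c0 + (∫ s in (0:ℝ)..t, h s) + c1 * ∫ s in (0:ℝ)..t, f s ^ p) :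
    ∃ T' : ℝ, T' ∈ Ioc 0 T ∧
      ∀ᵐ t ∂(volume.restrict (Ioc 0 T')),
        f t ≤ 2 * c0 + 2 * ∫ s in (0:ℝ)..t, h s := by
  have hIocT : MeasurableSet (Ioc (0:ℝ) T) := measurableSet_Ioc
  -- a.e. nonneg of f^p
  have hfp_nonneg : ∀ᵐ t ∂(volume.restrict (Ioc 0 T)), 0 ≤ f t ^ p := by
    filter_upwards [hf_nonneg] with t ht
    exact Real.rpow_nonneg ht p
  have hHT0 : 0 ≤ ∫ s in Ioc (0:ℝ) T, h s :=
    setIntegral_nonneg_of_ae_restrict hh_nonneg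
  have hΦT0 : 0 ≤ ∫ s in Ioc (0:ℝ) T, f s ^ p :=
    setIntegral_nonneg_of_ae_restrict hfp_nonneg
  set M : ℝ := c0 + (∫ s in Ioc (0:ℝ) T, h s) + c1 * ∫ s in Ioc (0:ℝ) T, f s ^ p with hMdef
  have hM0 : 0 ≤ M := by positivity
  -- monotonicity of partial integrals of h
  have hmonoh : ∀ s t : ℝ, s ≤ t → t ≤ T →
      (∫ u in Ioc (0:ℝ) s, h u) ≤ ∫ u in Ioc (0:ℝ) t, h u := by
    intro s t hst htT
    exact setIntegral_mono_set (hh_int.mono_set (Ioc_subset_Ioc_right htT))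
      (ae_restrict_of_ae_restrict_of_subset (Ioc_subset_Ioc_right htT) hh_nonneg)
      (HasSubset.Subset.eventuallyLE (Ioc_subset_Ioc_right hst))
  have hmonofp : ∀ s t : ℝ, s ≤ t → t ≤ T →
      (∫ u in Ioc (0:ℝ) s, f u ^ p) ≤ ∫ u in Ioc (0:ℝ) t, f u ^ p := by
    intro s t hst htT
    exact setIntegral_mono_set (hf_Lp.mono_set (Ioc_subset_Ioc_right htT))
      (ae_restrict_of_ae_restrict_of_subset (Ioc_subset_Ioc_right htT) hfp_nonneg)
      (HasSubset.Subset.eventuallyLE (Ioc_subset_Ioc_right hst))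
  -- a.e. bound f ≤ M
  have hfM : ∀ᵐ t ∂(volume.restrict (Ioc 0 T)), f t ≤ M := by
    filter_upwards [hineq, ae_restrict_mem hIocT] with t hft ht
    rw [intervalIntegral.integral_of_le ht.1.le, intervalIntegral.integral_of_le ht.1.le] at hft
    have h1 := hmonoh t T ht.2 le_rfl
    have h2 := hmonofp t T ht.2 le_rfl
    have := mul_le_mul_of_nonneg_left h2 hc1
    rw [hMdef]; linarith
  -- f is integrable on (0,T]
  have hf_int : IntegrableOn f (Ioc 0 T) := by
    refine Integrable.mono' (g := fun _ => M) (integrableOn_const measure_Ioc_lt_top.ne)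
      hf_meas.aestronglyMeasurable ?_
    filter_upwards [hf_nonneg, hfM] with t h0 h1
    rw [Real.norm_eq_abs, abs_of_nonneg h0]; exact h1
  -- linearization: f^p ≤ M^(p-1) f a.e.
  have hpow : ∀ᵐ t ∂(volume.restrict (Ioc 0 T)), f t ^ p ≤ M ^ (p - 1) * f t := by
    filter_upwards [hf_nonneg, hfM] with t h0 h1
    rcases eq_or_lt_of_le h0 with h0' | h0'
    · rw [← h0', Real.zero_rpow (by linarith : p ≠ 0)]
      simp
    · have e1 : f t ^ p = f t ^ (p - 1) * f t := by
        rw [← Real.rpow_add_one h0'.ne' (p - 1)]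
        norm_num
      rw [e1]
      exact mul_le_mul_of_nonneg_right
        (Real.rpow_le_rpow h0 h1 (by linarith)) h0
  -- ∫ f^p ≤ M^(p-1) ∫ f on each subinterval
  have key : ∀ s ∈ Ioc (0:ℝ) T,
      (∫ u in Ioc (0:ℝ) s, f u ^ p) ≤ M ^ (p - 1) * ∫ u in Ioc (0:ℝ) s, f u := by
    intro s hs
    rw [← integral_const_mul]
    exact setIntegral_mono_ae_restrict (hf_Lp.mono_set (Ioc_subset_Ioc_right hs.2))
      ((hf_int.mono_set (Ioc_subset_Ioc_right hs.2)).const_mul _)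
      (ae_restrict_of_ae_restrict_of_subset (Ioc_subset_Ioc_right hs.2) hpow)
  set C : ℝ := c1 * M ^ (p - 1) with hCdef
  have hC0 : 0 ≤ C := mul_nonneg hc1 (Real.rpow_nonneg hM0 _)
  -- linear integral inequality
  have hstep : ∀ᵐ s ∂(volume.restrict (Ioc 0 T)),
      f s ≤ (c0 + ∫ u in Ioc (0:ℝ) s, h u) + C * ∫ u in Ioc (0:ℝ) s, f u := by
    filter_upwards [hineq, ae_restrict_mem hIocT] with s hfs hsmem
    rw [intervalIntegral.integral_of_le hsmem.1.le, intervalIntegral.integral_of_le hsmem.1.le] at hfs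
    have h2 := mul_le_mul_of_nonneg_left (key s hsmem) hc1
    rw [hCdef]
    nlinarith [h2]
  -- monotonicity and nonnegativity of ψ
  have hmonof : ∀ s t : ℝ, s ≤ t → t ≤ T →
      (∫ u in Ioc (0:ℝ) s, f u) ≤ ∫ u in Ioc (0:ℝ) t, f u := by
    intro s t hst htT
    exact setIntegral_mono_set (hf_int.mono_set (Ioc_subset_Ioc_right htT))
      (ae_restrict_of_ae_restrict_of_subset (Ioc_subset_Ioc_right htT) hf_nonneg)
      (HasSubset.Subset.eventuallyLE (Ioc_subset_Ioc_right hst))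
  have hψ0 : ∀ t : ℝ, t ≤ T → 0 ≤ ∫ u in Ioc (0:ℝ) t, f u := by
    intro t htT
    exact setIntegral_nonneg_of_ae_restrict
      (ae_restrict_of_ae_restrict_of_subset (Ioc_subset_Ioc_right htT) hf_nonneg)
  have hB0 : ∀ t : ℝ, t ≤ T → 0 ≤ c0 + ∫ u in Ioc (0:ℝ) t, h u := by
    intro t htT
    have := setIntegral_nonneg_of_ae_restrict
      (ae_restrict_of_ae_restrict_of_subset (Ioc_subset_Ioc_right htT) hh_nonneg)
    linarith
  -- choose T'
  set T' : ℝ := min T (1 / (2 * C + 2)) with hT'def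
  have hT'pos : 0 < T' := lt_min hT (by positivity)
  have hT'le : T' ≤ T := min_le_left _ _
  have hCT' : C * T' ≤ 1 / 2 := by
    have h1 : T' ≤ 1 / (2 * C + 2) := min_le_right _ _
    have h2 : C * T' ≤ C * (1 / (2 * C + 2)) := mul_le_mul_of_nonneg_left h1 hC0
    have h3 : C * (1 / (2 * C + 2)) ≤ 1 / 2 := by
      rw [mul_one_div, div_le_iff₀ (by positivity)]
      linarith
    linarith
  -- key ψ bound on (0, T']
  have hψbound : ∀ t ∈ Ioc (0:ℝ) T',
      (∫ u in Ioc (0:ℝ) t, f u) ≤ 2 * t * (c0 + ∫ u in Ioc (0:ℝ) t, h u) := by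
    intro t ht
    have htT : t ≤ T := ht.2.trans hT'le
    set B : ℝ := c0 + ∫ u in Ioc (0:ℝ) t, h u with hBdef
    set ψ : ℝ := ∫ u in Ioc (0:ℝ) t, f u with hψdef
    have hconst : ∀ᵐ s ∂(volume.restrict (Ioc 0 t)), f s ≤ B + C * ψ := by
      filter_upwards [ae_restrict_of_ae_restrict_of_subset (Ioc_subset_Ioc_right htT) hstep,
        ae_restrict_mem measurableSet_Ioc] with s hfs hsmem
      have h1 := hmonoh s t hsmem.2 htT
      have h2 := mul_le_mul_of_nonneg_left (hmonof s t hsmem.2 htT) hC0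
      rw [hBdef, hψdef]; linarith
    have hint : ψ ≤ t * (B + C * ψ) := by
      have := setIntegral_mono_ae_restrict (μ := volume) (s := Ioc (0:ℝ) t)
        (hf_int.mono_set (Ioc_subset_Ioc_right htT))
        (integrableOn_const (C := B + C * ψ) measure_Ioc_lt_top.ne) hconst
      rwa [setIntegral_const, measureReal_def, Real.volume_Ioc, smul_eq_mul,
        ENNReal.toReal_ofReal (by linarith [ht.1] : (0:ℝ) ≤ t - 0), sub_zero] at this
    have hCt : C * t ≤ 1 / 2 := by
      have := mul_le_mul_of_nonneg_left ht.2 hC0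
      linarith
    have hψnn : 0 ≤ ψ := hψ0 t htT
    have hBnn : 0 ≤ B := hB0 t htT
    nlinarith [mul_le_mul_of_nonneg_right hCt hψnn]
  -- conclusion
  refine ⟨T', ⟨hT'pos, hT'le⟩, ?_⟩
  filter_upwards [ae_restrict_of_ae_restrict_of_subset (Ioc_subset_Ioc_right hT'le) hstep,
    ae_restrict_mem measurableSet_Ioc] with t hft ht
  rw [intervalIntegral.integral_of_le ht.1.le]
  have hψb := hψbound t ht
  have hBnn := hB0 t (ht.2.trans hT'le)
  have hCt : C * t ≤ 1 / 2 := by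
    have := mul_le_mul_of_nonneg_left ht.2 hC0
    linarith
  nlinarith [mul_le_mul_of_nonneg_left hψb hC0, mul_le_mul_of_nonneg_right hCt hBnn]
end

section
/- Let $g$ be a continuous solution on $[0,\tilde T]$ of the integral equation $g(t)=c_0+\int_0^t h(s)\,ds+c_1\int_0^t g(s)^p\,ds$, where $c_0,c_1\ge 0$, $h\ge 0$ integrable, $p\ge 1$. Then $g$ is nondecreasing and $g(0)=c_0$, and any measurable $f\ge 0$ satisfying $f(t)\le c_0+\int_0^t h\,ds+c_1\int_0^t f^p\,ds$ a.e. on $[0,\tilde T]$ with $f\in L^p$ satisfies $f(t)\le g(t)$ for a.e. $t\in[0,\tilde T]$. -/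
open MeasureTheory Set

/-! For a subsolution `f` put `F t = c₀ + ∫₀ᵗ h + c₁ ∫₀ᵗ f ^ p`. Since `f ≤ F` a.e.,
`F - g ≤ c₁ ∫₀ᵗ (F ^ p - g ^ p)`, and as `x ↦ x ^ p` is Lipschitz on bounded subsets of
`[0, ∞)`, the continuous function `(F - g)⁺` satisfies `(F - g)⁺ ≤ K ∫₀ᵗ (F - g)⁺`, so it vanishes
by Grönwall's lemma. The subsolution `f = 0` gives `g ≥ 0`, after which the equation shows
that `g` is nondecreasing. -/

theorem rpow_sub_rpow_le_mul_sub {p a b M : ℝ} (hp : 1 ≤ p) (ha : 0 ≤ a) (hab : a ≤ b)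
    (hbM : b ≤ M) : b ^ p - a ^ p ≤ p * M ^ (p - 1) * (b - a) := by
  have hderiv_le : ∀ x ∈ Icc 0 M, ‖p * x ^ (p - 1)‖ ≤ p * M ^ (p - 1) := fun x hx => by
    rw [Real.norm_of_nonneg (by have := hx.1; positivity)]
    exact mul_le_mul_of_nonneg_left (Real.rpow_le_rpow hx.1 hx.2 (by linarith)) (by linarith)
  have hmvt := (convex_Icc 0 M).norm_image_sub_le_of_norm_hasDerivWithin_le
    (fun x _ => (Real.hasDerivAt_rpow_const (Or.inr hp)).hasDerivWithinAt) hderiv_le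
    ⟨ha, hab.trans hbM⟩ ⟨ha.trans hab, hbM⟩
  rw [Real.norm_eq_abs, Real.norm_of_nonneg (sub_nonneg.mpr hab)] at hmvt
  exact (le_abs_self _).trans hmvt

theorem rpow_sub_rpow_le_mul_max_sub {p a b M : ℝ} (hp : 1 ≤ p) (hb : 0 ≤ b) (hbM : b ≤ M)
    (haM : |a| ≤ M) : b ^ p - a ^ p ≤ p * M ^ (p - 1) * max (b - a) 0 := by
  have hL : 0 ≤ p * M ^ (p - 1) := by have := hb.trans hbM; positivity
  rcases le_or_gt b a with hba | hab
  · have : b ^ p ≤ a ^ p := Real.rpow_le_rpow hb hba (by linarith)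
    linarith [mul_nonneg hL (le_max_right (b - a) 0)]
  rw [max_eq_left (sub_nonneg.mpr hab.le)]
  rcases le_or_gt 0 a with ha | ha
  · exact rpow_sub_rpow_le_mul_sub hp ha hab.le hbM
  -- For `a < 0`, `a ^ p` is a junk value of `Real.rpow`; all we know is `|a ^ p| ≤ |a| ^ p`.
  have hneg : -a ^ p ≤ |a| ^ p := (neg_le_abs _).trans (Real.abs_rpow_le_abs_rpow a p)
  have hb' := rpow_sub_rpow_le_mul_sub hp le_rfl hb hbM
  have ha' := rpow_sub_rpow_le_mul_sub hp le_rfl (abs_nonneg a) haM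
  rw [Real.zero_rpow (by linarith), abs_of_neg ha] at *
  linarith

theorem le_zero_of_le_mul_integral {K T : ℝ} {u : ℝ → ℝ} (hK : 0 ≤ K)
    (hu : ContinuousOn u (Icc 0 T)) (hle : ∀ t ∈ Icc 0 T, u t ≤ K * ∫ s in 0..t, u s) :
    ∀ t ∈ Icc 0 T, u t ≤ 0 := by
  set U : ℝ → ℝ := fun t => ∫ s in 0..t, u s
  have hU_deriv : ∀ t ∈ Icc 0 T, HasDerivWithinAt U (u t) (Icc 0 T) t := fun t ht => by
    have : Fact (t ∈ Icc 0 T) := ⟨ht⟩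
    exact intervalIntegral.integral_hasDerivWithinAt_right
      ((hu.mono (Icc_subset_Icc le_rfl ht.2)).intervalIntegrable_of_Icc ht.1)
      (hu.stronglyMeasurableAtFilter_nhdsWithin measurableSet_Icc t) (hu t ht)
  have hU_right_deriv : ∀ t ∈ Ico 0 T, HasDerivWithinAt U (u t) (Ici t) t := fun t ht =>
    (hU_deriv t (Ico_subset_Icc_self ht)).mono_of_mem_nhdsWithin
      (Filter.mem_of_superset (Icc_mem_nhdsGE ht.2) (Icc_subset_Icc_left ht.1))
  have hU_nonpos : ∀ t ∈ Icc 0 T, U t ≤ 0 := by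
    simpa only [gronwallBound_ε0_δ0] using le_gronwallBound_of_liminf_deriv_right_le (δ := 0)
      (ε := 0) (fun t ht => (hU_deriv t ht).continuousWithinAt)
      (fun t ht _ hr => (hU_right_deriv t ht).liminf_right_slope_le hr)
      (by simp [U]) (fun t ht => (add_zero (K * U t)).symm ▸ hle t (Ico_subset_Icc_self ht))
  exact fun t ht => (hle t ht).trans (mul_nonpos_of_nonneg_of_nonpos hK (hU_nonpos t ht))

theorem le_of_sub_le_mul_integral_rpow_sub {p c T : ℝ} {F g : ℝ → ℝ} (hp : 1 ≤ p) (hc : 0 ≤ c)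
    (hF : ContinuousOn F (Icc 0 T)) (hg : ContinuousOn g (Icc 0 T))
    (hF_nonneg : ∀ t ∈ Icc 0 T, 0 ≤ F t)
    (hle : ∀ t ∈ Icc 0 T, F t - g t ≤ c * ∫ s in 0..t, (F s ^ p - g s ^ p)) :
    ∀ t ∈ Icc 0 T, F t ≤ g t := by
  obtain ⟨M, hM⟩ := isCompact_Icc.exists_bound_of_continuousOn (hF.prodMk hg)
  intro t₀ ht₀
  have hM0 : 0 ≤ M := (norm_nonneg _).trans (hM 0 ⟨le_rfl, ht₀.1.trans ht₀.2⟩)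
  set L := p * M ^ (p - 1) with hL_def
  have hL : 0 ≤ L := by positivity
  set u : ℝ → ℝ := fun s => max (F s - g s) 0
  have hu : ContinuousOn u (Icc 0 T) := (hF.sub hg).sup continuousOn_const
  have hFg_rpow : ∀ s ∈ Icc 0 T, F s ^ p - g s ^ p ≤ L * u s := fun s hs =>
    rpow_sub_rpow_le_mul_max_sub hp (hF_nonneg s hs)
      ((le_abs_self _).trans ((norm_fst_le _).trans (hM s hs)))
      ((norm_snd_le (F s, g s)).trans (hM s hs))
  have hp0 : 0 ≤ p := by linarith
  have hFg_rpow_cont : ContinuousOn (fun s => F s ^ p - g s ^ p) (Icc 0 T) :=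
    (hF.rpow_const fun _ _ => Or.inr hp0).sub (hg.rpow_const fun _ _ => Or.inr hp0)
  have hu_le : ∀ t ∈ Icc 0 T, u t ≤ c * L * ∫ s in 0..t, u s := fun t ht => by
    have hsub : Icc 0 t ⊆ Icc 0 T := Icc_subset_Icc le_rfl ht.2
    refine max_le ?_ (mul_nonneg (mul_nonneg hc hL)
      (intervalIntegral.integral_nonneg ht.1 fun _ _ => le_max_right _ _))
    calc F t - g t ≤ c * ∫ s in 0..t, (F s ^ p - g s ^ p) := hle t ht
      _ ≤ c * ∫ s in 0..t, L * u s := by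
        gcongr
        refine intervalIntegral.integral_mono_on ht.1 ?_ ?_ fun s hs => hFg_rpow s (hsub hs)
        · exact (hFg_rpow_cont.mono hsub).intervalIntegrable_of_Icc ht.1
        · exact ((hu.mono hsub).intervalIntegrable_of_Icc ht.1).const_mul L
      _ = c * L * ∫ s in 0..t, u s := by
        rw [intervalIntegral.integral_const_mul, hL_def]; ring
  exact sub_nonpos.mp ((le_max_left _ _).trans
    (le_zero_of_le_mul_integral (mul_nonneg hc hL) hu hu_le t₀ ht₀))

theorem MeasureTheory.IntegrableOn.intervalIntegrable_of_mem_Icc {f : ℝ → ℝ} {a b t : ℝ}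
    (hf : IntegrableOn f (Ioc a b)) (ht : t ∈ Icc a b) : IntervalIntegrable f volume a t :=
  (intervalIntegrable_iff_integrableOn_Ioc_of_le ht.1).mpr (hf.mono_set (Ioc_subset_Ioc_right ht.2))

theorem MeasureTheory.IntegrableOn.continuousOn_primitive_Icc {f : ℝ → ℝ} {a b : ℝ} (hab : a ≤ b)
    (hf : IntegrableOn f (Ioc a b)) : ContinuousOn (fun t => ∫ s in a..t, f s) (Icc a b) := by
  simpa only [uIcc_of_le hab] using intervalIntegral.continuousOn_primitive_interval'
    (hf.intervalIntegrable_of_mem_Icc ⟨hab, le_rfl⟩) left_mem_uIcc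

theorem MeasureTheory.IntegrableOn.monotoneOn_primitive {f : ℝ → ℝ} {a b : ℝ}
    (hf : IntegrableOn f (Ioc a b))
    (hf_nonneg : ∀ᵐ t ∂(volume.restrict (Ioc a b)), 0 ≤ f t) :
    MonotoneOn (fun t => ∫ s in a..t, f s) (Icc a b) := fun _ hx _ hy hxy =>
  intervalIntegral.integral_mono_interval le_rfl hx.1 hxy
    (ae_restrict_of_ae_restrict_of_subset (Ioc_subset_Ioc_right hy.2) hf_nonneg)
    (hf.intervalIntegrable_of_mem_Icc hy)

theorem intervalIntegral.integral_mono_of_ae_restrict_Ioc {f g : ℝ → ℝ} {a b t : ℝ}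
    (hf : IntegrableOn f (Ioc a b)) (hg : IntegrableOn g (Ioc a b))
    (hfg : f ≤ᵐ[volume.restrict (Ioc a b)] g) (ht : t ∈ Icc a b) :
    ∫ s in a..t, f s ≤ ∫ s in a..t, g s := by
  have hsub : Ioc a t ⊆ Ioc a b := Ioc_subset_Ioc_right ht.2
  rw [intervalIntegral.integral_of_le ht.1, intervalIntegral.integral_of_le ht.1]
  exact setIntegral_mono_ae_restrict (hf.mono_set hsub) (hg.mono_set hsub)
    (ae_restrict_of_ae_restrict_of_subset hsub hfg)

noncomputable def volterraMap (c0 c1 p : ℝ) (h f : ℝ → ℝ) (t : ℝ) : ℝ :=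
  c0 + (∫ s in (0:ℝ)..t, h s) + c1 * ∫ s in (0:ℝ)..t, f s ^ p

section volterraMap

variable {c0 c1 p T : ℝ} {h f g : ℝ → ℝ}

theorem continuousOn_volterraMap (hT : 0 ≤ T) (hh : IntegrableOn h (Ioc 0 T))
    (hf : IntegrableOn (fun t => f t ^ p) (Ioc 0 T)) :
    ContinuousOn (volterraMap c0 c1 p h f) (Icc 0 T) :=
  (continuousOn_const.add (hh.continuousOn_primitive_Icc hT)).add
    (continuousOn_const.mul (hf.continuousOn_primitive_Icc hT))

theorem monotoneOn_volterraMap (hc1 : 0 ≤ c1) (hh : IntegrableOn h (Ioc 0 T))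
    (hh_nonneg : ∀ᵐ t ∂(volume.restrict (Ioc 0 T)), 0 ≤ h t)
    (hf : IntegrableOn (fun t => f t ^ p) (Ioc 0 T))
    (hf_nonneg : ∀ᵐ t ∂(volume.restrict (Ioc 0 T)), 0 ≤ f t ^ p) :
    MonotoneOn (volterraMap c0 c1 p h f) (Icc 0 T) := fun _ ha _ hb hab =>
  add_le_add (add_le_add_right (hh.monotoneOn_primitive hh_nonneg ha hb hab) _)
    (mul_le_mul_of_nonneg_left (hf.monotoneOn_primitive hf_nonneg ha hb hab) hc1)

theorem volterraMap_zero : volterraMap c0 c1 p h f 0 = c0 := by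
  simp [volterraMap]

theorem volterraMap_nonneg (hc0 : 0 ≤ c0) (hc1 : 0 ≤ c1) (hh : IntegrableOn h (Ioc 0 T))
    (hh_nonneg : ∀ᵐ t ∂(volume.restrict (Ioc 0 T)), 0 ≤ h t)
    (hf : IntegrableOn (fun t => f t ^ p) (Ioc 0 T))
    (hf_nonneg : ∀ᵐ t ∂(volume.restrict (Ioc 0 T)), 0 ≤ f t ^ p) :
    ∀ t ∈ Icc 0 T, 0 ≤ volterraMap c0 c1 p h f t := fun t ht =>
  calc 0 ≤ c0 := hc0
    _ = volterraMap c0 c1 p h f 0 := volterraMap_zero.symm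
    _ ≤ volterraMap c0 c1 p h f t :=
      monotoneOn_volterraMap hc1 hh hh_nonneg hf hf_nonneg ⟨le_rfl, ht.1.trans ht.2⟩ ht ht.1

theorem volterraMap_le_of_ae_le_volterraMap (hp : 1 ≤ p) (hc0 : 0 ≤ c0) (hc1 : 0 ≤ c1)
    (hT : 0 ≤ T) (hh : IntegrableOn h (Ioc 0 T))
    (hh_nonneg : ∀ᵐ t ∂(volume.restrict (Ioc 0 T)), 0 ≤ h t)
    (hg_cont : ContinuousOn g (Icc 0 T))
    (hg_eq : ∀ t ∈ Icc 0 T, g t = volterraMap c0 c1 p h g t)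
    (hf_nonneg : ∀ᵐ t ∂(volume.restrict (Ioc 0 T)), 0 ≤ f t)
    (hf : IntegrableOn (fun t => f t ^ p) (Ioc 0 T))
    (hf_le : ∀ᵐ t ∂(volume.restrict (Ioc 0 T)), f t ≤ volterraMap c0 c1 p h f t) :
    ∀ t ∈ Icc 0 T, volterraMap c0 c1 p h f t ≤ g t := by
  set F := volterraMap c0 c1 p h f
  have hp0 : 0 ≤ p := by linarith
  have hF_cont : ContinuousOn F (Icc 0 T) := continuousOn_volterraMap hT hh hf
  have hgp_cont : ContinuousOn (fun s => g s ^ p) (Icc 0 T) :=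
    hg_cont.rpow_const fun _ _ => Or.inr hp0
  have hFp_cont : ContinuousOn (fun s => F s ^ p) (Icc 0 T) :=
    hF_cont.rpow_const fun _ _ => Or.inr hp0
  have hfp_le : ∀ᵐ t ∂(volume.restrict (Ioc 0 T)), f t ^ p ≤ F t ^ p := by
    filter_upwards [hf_nonneg, hf_le] with t h0f hfF
    exact Real.rpow_le_rpow h0f hfF hp0
  refine le_of_sub_le_mul_integral_rpow_sub hp hc1 hF_cont hg_cont
    (volterraMap_nonneg hc0 hc1 hh hh_nonneg hf (hf_nonneg.mono fun _ hs => Real.rpow_nonneg hs p))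
    fun t ht => ?_
  have hgp_int := (hgp_cont.mono (Icc_subset_Icc_right ht.2)).intervalIntegrable_of_Icc
    (μ := volume) ht.1
  have hFp_int := (hFp_cont.mono (Icc_subset_Icc_right ht.2)).intervalIntegrable_of_Icc
    (μ := volume) ht.1
  calc F t - g t = c1 * ((∫ s in (0:ℝ)..t, f s ^ p) - ∫ s in (0:ℝ)..t, g s ^ p) := by
        rw [hg_eq t ht]
        simp only [F, volterraMap]
        ring
    _ ≤ c1 * ((∫ s in (0:ℝ)..t, F s ^ p) - ∫ s in (0:ℝ)..t, g s ^ p) := by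
        gcongr
        exact intervalIntegral.integral_mono_of_ae_restrict_Ioc hf
          (hFp_cont.integrableOn_Icc.mono_set Ioc_subset_Icc_self) hfp_le ht
    _ = c1 * ∫ s in (0:ℝ)..t, (F s ^ p - g s ^ p) := by
        rw [intervalIntegral.integral_sub hFp_int hgp_int]

theorem nonneg_of_eq_volterraMap (hp : 1 ≤ p) (hc0 : 0 ≤ c0) (hc1 : 0 ≤ c1) (hT : 0 ≤ T)
    (hh : IntegrableOn h (Ioc 0 T)) (hh_nonneg : ∀ᵐ t ∂(volume.restrict (Ioc 0 T)), 0 ≤ h t)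
    (hg_cont : ContinuousOn g (Icc 0 T))
    (hg_eq : ∀ t ∈ Icc 0 T, g t = volterraMap c0 c1 p h g t) :
    ∀ t ∈ Icc 0 T, 0 ≤ g t := by
  have hzero_pow : (fun t => (0 : ℝ → ℝ) t ^ p) = 0 :=
    funext fun _ => Real.zero_rpow (zero_lt_one.trans_le hp).ne'
  have hzero_int : IntegrableOn (fun t => (0 : ℝ → ℝ) t ^ p) (Ioc 0 T) := by
    rw [hzero_pow]; exact integrableOn_zero
  have hzero_nonneg := volterraMap_nonneg (c1 := c1) hc0 hc1 hh hh_nonneg hzero_int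
    (ae_of_all _ fun t => (congrFun hzero_pow t).ge)
  exact fun t ht => (hzero_nonneg t ht).trans <|
    volterraMap_le_of_ae_le_volterraMap hp hc0 hc1 hT hh hh_nonneg hg_cont hg_eq
      (ae_of_all _ fun _ => le_rfl) hzero_int
      (ae_restrict_of_forall_mem measurableSet_Ioc fun s hs =>
        hzero_nonneg s (Ioc_subset_Icc_self hs)) t ht

theorem monotoneOn_of_eq_volterraMap (hp : 1 ≤ p) (hc0 : 0 ≤ c0) (hc1 : 0 ≤ c1) (hT : 0 ≤ T)
    (hh : IntegrableOn h (Ioc 0 T)) (hh_nonneg : ∀ᵐ t ∂(volume.restrict (Ioc 0 T)), 0 ≤ h t)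
    (hg_cont : ContinuousOn g (Icc 0 T))
    (hg_eq : ∀ t ∈ Icc 0 T, g t = volterraMap c0 c1 p h g t) :
    MonotoneOn g (Icc 0 T) :=
  (monotoneOn_volterraMap hc1 hh hh_nonneg
    ((hg_cont.rpow_const fun _ _ => Or.inr (by linarith)).integrableOn_Icc.mono_set
      Ioc_subset_Icc_self)
    (ae_restrict_of_forall_mem measurableSet_Ioc fun t ht => Real.rpow_nonneg
      (nonneg_of_eq_volterraMap hp hc0 hc1 hT hh hh_nonneg hg_cont hg_eq t
        (Ioc_subset_Icc_self ht)) p)).congr (EqOn.symm hg_eq)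

end volterraMap

/-- **Comparison principle for the nonlinear Volterra integral equation.** If a
continuous `g` on `[0,T']` solves `g t = c₀ + ∫₀ᵗ h + c₁ ∫₀ᵗ g^p` with
`c₀, c₁ ≥ 0`, `h ≥ 0` integrable and `p ≥ 1`, then `g` is nondecreasing with
`g 0 = c₀`, and any nonnegative measurable `f ∈ L^p` satisfying the
corresponding integral inequality a.e. satisfies `f ≤ g` a.e. on `[0,T']`. -/
theorem volterra_comparison_principle
    (T' p c0 c1 : ℝ) (hT' : 0 < T') (hp : 1 ≤ p) (hc0 : 0 ≤ c0) (hc1 : 0 ≤ c1)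
    (h : ℝ → ℝ)
    (hh_nonneg : ∀ᵐ t ∂(volume.restrict (Ioc 0 T')), 0 ≤ h t)
    (hh_int : IntegrableOn h (Ioc 0 T'))
    (g : ℝ → ℝ) (hg_cont : ContinuousOn g (Icc 0 T'))
    (hg_eq : ∀ t ∈ Icc (0:ℝ) T',
      g t = c0 + (∫ s in (0:ℝ)..t, h s) + c1 * ∫ s in (0:ℝ)..t, g s ^ p) :
    (MonotoneOn g (Icc 0 T') ∧ g 0 = c0) ∧
      ∀ f : ℝ → ℝ, AEMeasurable f (volume.restrict (Ioc 0 T')) →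
        (∀ᵐ t ∂(volume.restrict (Ioc 0 T')), 0 ≤ f t) →
        IntegrableOn (fun t => f t ^ p) (Ioc 0 T') →
        (∀ᵐ t ∂(volume.restrict (Ioc 0 T')),
          f t ≤ c0 + (∫ s in (0:ℝ)..t, h s) + c1 * ∫ s in (0:ℝ)..t, f s ^ p) →
        ∀ᵐ t ∂(volume.restrict (Ioc 0 T')), f t ≤ g t := by
  refine ⟨⟨monotoneOn_of_eq_volterraMap hp hc0 hc1 hT'.le hh_int hh_nonneg hg_cont hg_eq,
    (hg_eq 0 ⟨le_rfl, hT'.le⟩).trans volterraMap_zero⟩, fun f _ hf_nonneg hfp_int hf_le => ?_⟩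
  filter_upwards [hf_le, ae_restrict_mem measurableSet_Ioc] with t hft ht
  exact hft.trans (volterraMap_le_of_ae_le_volterraMap hp hc0 hc1 hT'.le hh_int hh_nonneg hg_cont
    hg_eq hf_nonneg hfp_int hf_le t (Ioc_subset_Icc_self ht))
end
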